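/- arXiv:1311.0665 — 5 statements merged into one kernel-verified Lean document; each statement's English description precedes it below -/
import Mathlib

section
/- Let {λ_{j,n}}_{n∈ℕ} ⊂ (0,∞) and {t_{j,n}}_{n∈ℕ} ⊂ ℝ, indexed by integers j ≥ 1, be arbitrary families of sequences. Then there exists a strictly increasing map σ : ℕ → ℕ such that for every j, k ≥ 1 and every T ∈ ℝ, the sequence n ↦ (λ_{j,σ(n)} T + t_{j,σ(n)} − t_{k,σ(n)})/λ_{k,σ(n)} converges to a limit in the extended reals [−∞, +∞]. -/
open Filter Topology

/-! For fixed `j, k` the quantity is an affine function `T ↦ aₙ T + bₙ` of `T`, with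
`aₙ = λ_{j,n} / λ_{k,n}` and `bₙ = (t_{j,n} - t_{k,n}) / λ_{k,n}`. By compactness of the
countable product of copies of `[-∞, ∞]³`, one extraction makes `aₙ`, `bₙ` and `bₙ / aₙ`
converge for all pairs, to `A`, `B`, `C` say. If `A` is finite, `aₙ T + bₙ → A T + B` for every
`T`; otherwise `aₙ T + bₙ = aₙ (T + bₙ / aₙ) → A (T + C)`, which is determinate unless
`T + C = 0`. That leaves at most one exceptional time `T = -C` per pair, and a second
extraction makes the quantity converge at all these countably many times. -/

lemma exists_strictMono_tendsto_pi {ι X : Type*} [Countable ι] [TopologicalSpace X]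
    [CompactSpace X] [TopologicalSpace.PseudoMetrizableSpace X] (x : ℕ → ι → X) :
    ∃ φ : ℕ → ℕ, StrictMono φ ∧
      ∃ L : ι → X, ∀ i, Tendsto (fun n => x (φ n) i) atTop (𝓝 (L i)) := by
  obtain ⟨L, -, φ, hφ, hL⟩ := isCompact_univ.tendsto_subseq (x := x) fun _ => Set.mem_univ _
  exact ⟨φ, hφ, L, tendsto_pi_nhds.mp hL⟩

namespace EReal

variable {a b : ℕ → ℝ}

lemma tendsto_coe_mul_add_of_tendsto {A : ℝ} {B : EReal} (hA : Tendsto a atTop (𝓝 A))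
    (hB : Tendsto (fun n => (b n : EReal)) atTop (𝓝 B)) (T : ℝ) :
    Tendsto (fun n => ((a n * T + b n : ℝ) : EReal)) atTop (𝓝 ((A * T : ℝ) + B)) := by
  have hAT : Tendsto (fun n => ((a n * T : ℝ) : EReal)) atTop (𝓝 ((A * T : ℝ) : EReal)) :=
    tendsto_coe.mpr (hA.mul_const T)
  simp only [coe_add]
  exact (continuousAt_add (.inl (coe_ne_top _)) (.inl (coe_ne_bot _))).tendsto.comp
    (hAT.prodMk_nhds hB)

lemma tendsto_coe_mul_add_of_ne_zero {A C : EReal}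
    (hA : Tendsto (fun n => (a n : EReal)) atTop (𝓝 A)) (hA₀ : A ≠ 0)
    (hC : Tendsto (fun n => ((b n / a n : ℝ) : EReal)) atTop (𝓝 C)) {T : ℝ}
    (hT : (T : EReal) + C ≠ 0) :
    Tendsto (fun n => ((a n * T + b n : ℝ) : EReal)) atTop (𝓝 (A * (T + C))) := by
  have hTC : Tendsto (fun n => (T : EReal) + ((b n / a n : ℝ) : EReal)) atTop (𝓝 (T + C)) :=
    (continuousAt_add (.inl (coe_ne_top _)) (.inl (coe_ne_bot _))).tendsto.comp
      (tendsto_const_nhds.prodMk_nhds hC)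
  refine (EReal.Tendsto.mul hA hTC (.inl hA₀) (.inl hA₀) (.inr hT) (.inr hT)).congr' ?_
  filter_upwards [hA.eventually_ne hA₀] with n hn
  have hn : a n ≠ 0 := by exact_mod_cast hn
  rw [← coe_add, ← coe_mul, mul_add, mul_div_cancel₀ _ hn]

lemma exists_tendsto_coe_mul_add {A B C : EReal}
    (hA : Tendsto (fun n => (a n : EReal)) atTop (𝓝 A))
    (hB : Tendsto (fun n => (b n : EReal)) atTop (𝓝 B))
    (hC : Tendsto (fun n => ((b n / a n : ℝ) : EReal)) atTop (𝓝 C)) {T : ℝ}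
    (hT : (T : EReal) + C ≠ 0) :
    ∃ L : EReal, Tendsto (fun n => ((a n * T + b n : ℝ) : EReal)) atTop (𝓝 L) := by
  induction A with
  | bot => exact ⟨_, tendsto_coe_mul_add_of_ne_zero hA bot_ne_zero hC hT⟩
  | top => exact ⟨_, tendsto_coe_mul_add_of_ne_zero hA top_ne_zero hC hT⟩
  | coe A => exact ⟨_, tendsto_coe_mul_add_of_tendsto (tendsto_coe.mp hA) hB T⟩

lemma eq_neg_toReal_of_coe_add_eq_zero {T : ℝ} {C : EReal} (h : (T : EReal) + C = 0) :
    T = -C.toReal := by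
  induction C with
  | bot => simp at h
  | top => simp at h
  | coe C =>
    rw [toReal_coe]
    exact eq_neg_of_add_eq_zero_left (by exact_mod_cast h)

end EReal

theorem exists_strictMono_tendsto_coe_mul_add {ι : Type*} [Countable ι] (a b : ι → ℕ → ℝ) :
    ∃ φ : ℕ → ℕ, StrictMono φ ∧ ∀ i, ∀ T : ℝ, ∃ L : EReal,
      Tendsto (fun n => ((a i (φ n) * T + b i (φ n) : ℝ) : EReal)) atTop (𝓝 L) := by
  obtain ⟨φ, hφ, L, hL⟩ := exists_strictMono_tendsto_pi fun n i =>
    ((a i n : EReal), (b i n : EReal), ((b i n / a i n : ℝ) : EReal))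
  obtain ⟨ψ, hψ, M, hM⟩ := exists_strictMono_tendsto_pi fun n i =>
    ((a i (φ n) * -(L i).2.2.toReal + b i (φ n) : ℝ) : EReal)
  refine ⟨φ ∘ ψ, hφ.comp hψ, fun i T => ?_⟩
  by_cases hT : (T : EReal) + (L i).2.2 = 0
  · exact ⟨M i, EReal.eq_neg_toReal_of_coe_add_eq_zero hT ▸ hM i⟩
  · have hLψ := (hL i).comp hψ.tendsto_atTop
    exact EReal.exists_tendsto_coe_mul_add hLψ.fst_nhds hLψ.snd_nhds.fst_nhds
      hLψ.snd_nhds.snd_nhds hT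

theorem extraction_all_limits_exist_general
    (lam t : ℕ → ℕ → ℝ) :
    ∃ σ : ℕ → ℕ, StrictMono σ ∧
      ∀ j k : ℕ, ∀ T : ℝ, ∃ L : EReal,
        Tendsto
          (fun n => (((lam j (σ n) * T + t j (σ n) - t k (σ n)) / lam k (σ n) : ℝ) : EReal))
          atTop (nhds L) := by
  obtain ⟨σ, hσ, hlim⟩ := exists_strictMono_tendsto_coe_mul_add
    (fun p : ℕ × ℕ => fun n => lam p.1 n / lam p.2 n)
    (fun p n => (t p.1 n - t p.2 n) / lam p.2 n)
  refine ⟨σ, hσ, fun j k T => ?_⟩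
  obtain ⟨L, hL⟩ := hlim (j, k) T
  exact ⟨L, hL.congr fun n => congrArg _ (by ring)⟩

/-- Claim A.1: after extraction of a subsequence, for all indices `j, k` and all real `T`,
the sequence `n ↦ (λ_{j,n} T + t_{j,n} − t_{k,n}) / λ_{k,n}` converges in the extended reals. -/
theorem extraction_all_limits_exist
    (lam t : ℕ → ℕ → ℝ) (hlam : ∀ j n, 0 < lam j n) :
    ∃ σ : ℕ → ℕ, StrictMono σ ∧
      ∀ j k : ℕ, ∀ T : ℝ, ∃ L : EReal,
        Tendsto
          (fun n => (((lam j (σ n) * T + t j (σ n) - t k (σ n)) / lam k (σ n) : ℝ) : EReal))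
          atTop (nhds L) :=
  extraction_all_limits_exist_general lam t
end

section
/- For each integer j ≥ 1, let scat(j) be a proposition, let T(j) ∈ (0, +∞] be an extended real, and let {λ_{j,n}}_{n∈ℕ} ⊂ (0,∞), {t_{j,n}}_{n∈ℕ} ⊂ ℝ be sequences. Assume that for all j, k ≥ 1 and all T ∈ ℝ the sequence n ↦ (λ_{j,n} T + t_{j,n} − t_{k,n})/λ_{k,n} converges to a limit L(j,k,T) ∈ [−∞, +∞]. Define the relation j ≼ k to hold if and only if scat(k) holds, or else scat(j) fails and for every real T < T(j) one has L(j,k,T) < T(k) (strict inequality in the extended reals). Then ≼ is a total preorder: (i) j ≼ j for all j; (ii) if j ≼ k and k ≼ ℓ then j ≼ ℓ; (iii) for all j, k, either j ≼ k or k ≼ j; (iv) defining j ≺ k as the negation of k ≼ j, one has j ≺ k if and only if j ≼ k holds and k ≼ j fails. -/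
open Filter Topology

/-!
Write `φⁿ_{jk}(T) = (λ_{j,n} T + t_{j,n} - t_{k,n}) / λ_{k,n}`, so that
`L(j,k,T) = lim φⁿ_{jk}(T)`. For each `n` these maps are increasing, `φⁿ_{jj} = id` and
`φⁿ_{kl} ∘ φⁿ_{jk} = φⁿ_{jl}`.
Passing to the limit, `L(j,k,T) < T'` forces `L(j,l,T) ≤ L(k,l,T')`, and `T' < L(j,k,T)` forces
`L(k,l,T') ≤ L(j,l,T)`. The first inequality (through a real `T'` between `L(j,k,T)` and `T(k)`)
gives transitivity. The second with `l = j` gives totality: if `T(k) ≤ L(j,k,T₁)` for some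
`T₁ < T(j)`, then every `T₂ < T(k)` has `L(k,j,T₂) ≤ L(j,j,T₁) = T₁ < T(j)`.
-/

section MonotoneLimits

variable {α : Type*} {l : Filter α} [l.NeBot] {f g : α → ℝ → ℝ} {x y : ℝ} {a b c : EReal}

theorem le_of_tendsto_comp_of_lt (hg : ∀ n, Monotone (g n))
    (ha : Tendsto (fun n => (f n x : EReal)) l (𝓝 a))
    (hb : Tendsto (fun n => (g n (f n x) : EReal)) l (𝓝 b))
    (hc : Tendsto (fun n => (g n y : EReal)) l (𝓝 c)) (hay : a < y) : b ≤ c := by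
  refine le_of_tendsto_of_tendsto hb hc ?_
  filter_upwards [ha.eventually_lt_const hay] with n hn
  exact EReal.coe_le_coe_iff.mpr (hg n (EReal.coe_lt_coe_iff.mp hn).le)

theorem le_of_tendsto_comp_of_gt (hg : ∀ n, Monotone (g n))
    (ha : Tendsto (fun n => (f n x : EReal)) l (𝓝 a))
    (hb : Tendsto (fun n => (g n (f n x) : EReal)) l (𝓝 b))
    (hc : Tendsto (fun n => (g n y : EReal)) l (𝓝 c)) (hya : (y : EReal) < a) : c ≤ b := by
  refine le_of_tendsto_of_tendsto hc hb ?_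
  filter_upwards [ha.eventually_const_lt hya] with n hn
  exact EReal.coe_le_coe_iff.mpr (hg n (EReal.coe_lt_coe_iff.mp hn).le)

end MonotoneLimits

section RenormalizedTime

variable {ι : Type*} {lam t : ι → ℕ → ℝ} {j k l : ι} {n : ℕ}

/-- The time `T` of the `j`-th profile, read in the time variable of the `k`-th one. -/
noncomputable def renormalizedTime (lam t : ι → ℕ → ℝ) (j k : ι) (n : ℕ) (T : ℝ) : ℝ :=
  (lam j n * T + t j n - t k n) / lam k n

theorem renormalizedTime_self (h : lam j n ≠ 0) (T : ℝ) :
    renormalizedTime lam t j j n T = T := by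
  rw [renormalizedTime, add_sub_cancel_right, mul_div_cancel_left₀ _ h]

theorem renormalizedTime_comp (h : lam k n ≠ 0) (T : ℝ) :
    renormalizedTime lam t k l n (renormalizedTime lam t j k n T) =
      renormalizedTime lam t j l n T := by
  unfold renormalizedTime
  field_simp
  ring

theorem renormalizedTime_monotone (hj : 0 ≤ lam j n) (hk : 0 ≤ lam k n) :
    Monotone (renormalizedTime lam t j k n) := fun _ _ hT => by
  unfold renormalizedTime
  gcongr

variable {L : ι → ι → ℝ → EReal}

theorem limit_renormalizedTime_self (hlam : ∀ n, lam j n ≠ 0)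
    (hL : Tendsto (fun n => (renormalizedTime lam t j j n T : EReal)) atTop (𝓝 (L j j T))) :
    L j j T = T := by
  refine tendsto_nhds_unique hL ?_
  simp only [renormalizedTime_self (hlam _)]
  exact tendsto_const_nhds

variable {T T' : ℝ}

theorem limit_renormalizedTime_le_of_lt (hk : ∀ n, 0 < lam k n) (hl : ∀ n, 0 < lam l n)
    (hjk : Tendsto (fun n => (renormalizedTime lam t j k n T : EReal)) atTop (𝓝 (L j k T)))
    (hjl : Tendsto (fun n => (renormalizedTime lam t j l n T : EReal)) atTop (𝓝 (L j l T)))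
    (hkl : Tendsto (fun n => (renormalizedTime lam t k l n T' : EReal)) atTop (𝓝 (L k l T')))
    (h : L j k T < T') : L j l T ≤ L k l T' :=
  le_of_tendsto_comp_of_lt (fun n => renormalizedTime_monotone (hk n).le (hl n).le) hjk
    (by simpa only [renormalizedTime_comp (hk _).ne'] using hjl) hkl h

theorem limit_renormalizedTime_le_of_gt (hk : ∀ n, 0 < lam k n) (hl : ∀ n, 0 < lam l n)
    (hjk : Tendsto (fun n => (renormalizedTime lam t j k n T : EReal)) atTop (𝓝 (L j k T)))
    (hjl : Tendsto (fun n => (renormalizedTime lam t j l n T : EReal)) atTop (𝓝 (L j l T)))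
    (hkl : Tendsto (fun n => (renormalizedTime lam t k l n T' : EReal)) atTop (𝓝 (L k l T')))
    (h : (T' : EReal) < L j k T) : L k l T' ≤ L j l T :=
  le_of_tendsto_comp_of_gt (fun n => renormalizedTime_monotone (hk n).le (hl n).le) hjk
    (by simpa only [renormalizedTime_comp (hk _).ne'] using hjl) hkl h

end RenormalizedTime

section Precedes

variable {ι : Type*} (scat : ι → Prop) (Tmax : ι → EReal) (L : ι → ι → ℝ → EReal)

/-- The preorder `j ≼ k` of Notation 3.4. -/
def Precedes (j k : ι) : Prop :=
  scat k ∨ (¬ scat j ∧ ∀ T : ℝ, (T : EReal) < Tmax j → L j k T < Tmax k)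

variable {scat Tmax L} {lam t : ι → ℕ → ℝ}

theorem precedes_refl (hself : ∀ j (T : ℝ), L j j T = T) (j : ι) :
    Precedes scat Tmax L j j := by
  by_cases hj : scat j
  · exact .inl hj
  · exact .inr ⟨hj, fun T hT => (hself j T).symm ▸ hT⟩

theorem precedes_trans (hlam : ∀ j n, 0 < lam j n)
    (hL : ∀ j k T,
      Tendsto (fun n => (renormalizedTime lam t j k n T : EReal)) atTop (𝓝 (L j k T)))
    {j k l : ι} (hjk : Precedes scat Tmax L j k)
    (hkl : Precedes scat Tmax L k l) : Precedes scat Tmax L j l := by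
  rcases hkl with hl | ⟨hk, hkl⟩
  · exact .inl hl
  rcases hjk with hk' | ⟨hj, hjk⟩
  · exact absurd hk' hk
  refine .inr ⟨hj, fun T hT => ?_⟩
  obtain ⟨T', hjkT', hT'⟩ := EReal.exists_between_coe_real (hjk T hT)
  exact (limit_renormalizedTime_le_of_lt (hlam k) (hlam l) (hL j k T) (hL j l T)
    (hL k l T') hjkT').trans_lt (hkl T' hT')

theorem precedes_total (hlam : ∀ j n, 0 < lam j n)
    (hL : ∀ j k T,
      Tendsto (fun n => (renormalizedTime lam t j k n T : EReal)) atTop (𝓝 (L j k T)))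
    (j k : ι) : Precedes scat Tmax L j k ∨ Precedes scat Tmax L k j := by
  by_cases hk : scat k
  · exact .inl (.inl hk)
  by_cases hj : scat j
  · exact .inr (.inl hj)
  by_cases hjk : ∀ T : ℝ, (T : EReal) < Tmax j → L j k T < Tmax k
  · exact .inl (.inr ⟨hj, hjk⟩)
  push Not at hjk
  obtain ⟨T₁, hT₁, hkT₁⟩ := hjk
  refine .inr (.inr ⟨hk, fun T₂ hT₂ => ?_⟩)
  have hL₂ : L k j T₂ ≤ L j j T₁ := limit_renormalizedTime_le_of_gt (hlam k) (hlam j)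
    (hL j k T₁) (hL j j T₁) (hL k j T₂) (hT₂.trans_le hkT₁)
  calc L k j T₂ ≤ L j j T₁ := hL₂
    _ = T₁ := limit_renormalizedTime_self (fun n => (hlam j n).ne') (hL j j T₁)
    _ < Tmax j := hT₁

end Precedes

theorem profile_relation_total_preorder_general
    (scat : ℕ → Prop) (Tmax : ℕ → EReal)
    (lam t : ℕ → ℕ → ℝ) (hlam : ∀ j n, 0 < lam j n)
    (L : ℕ → ℕ → ℝ → EReal)
    (hL : ∀ j k : ℕ, ∀ T : ℝ,
      Tendsto (fun n => (((lam j n * T + t j n - t k n) / lam k n : ℝ) : EReal))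
        atTop (nhds (L j k T)))
    (rel : ℕ → ℕ → Prop)
    (hrel : ∀ j k, rel j k ↔
      (scat k ∨ (¬ scat j ∧ ∀ T : ℝ, (T : EReal) < Tmax j → L j k T < Tmax k))) :
    (∀ j, rel j j) ∧
    (∀ j k l, rel j k → rel k l → rel j l) ∧
    (∀ j k, rel j k ∨ rel k j) ∧
    (∀ j k, ¬ rel k j ↔ (rel j k ∧ ¬ (rel j k ∧ rel k j))) := by
  obtain rfl : rel = Precedes scat Tmax L := funext₂ fun j k => propext (hrel j k)
  have hself j T : L j j T = T := limit_renormalizedTime_self (fun n => (hlam j n).ne') (hL j j T)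
  refine ⟨precedes_refl hself, fun j k l => precedes_trans hlam hL,
    precedes_total hlam hL, fun j k => ?_⟩
  have := precedes_total (scat := scat) (Tmax := Tmax) hlam hL j k
  tauto

/-- Claim 3.5: the relation `≼` on profile indices, defined from the scattering predicate,
the maximal forward times of existence and the limits of renormalized parameters, is a
total preorder. -/
theorem profile_relation_total_preorder
    (scat : ℕ → Prop) (Tmax : ℕ → EReal) (hTmax : ∀ j, 0 < Tmax j)
    (lam t : ℕ → ℕ → ℝ) (hlam : ∀ j n, 0 < lam j n)
    (L : ℕ → ℕ → ℝ → EReal)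
    (hL : ∀ j k : ℕ, ∀ T : ℝ,
      Tendsto (fun n => (((lam j n * T + t j n - t k n) / lam k n : ℝ) : EReal))
        atTop (nhds (L j k T)))
    (rel : ℕ → ℕ → Prop)
    (hrel : ∀ j k, rel j k ↔
      (scat k ∨ (¬ scat j ∧ ∀ T : ℝ, (T : EReal) < Tmax j → L j k T < Tmax k))) :
    (∀ j, rel j j) ∧
    (∀ j k l, rel j k → rel k l → rel j l) ∧
    (∀ j k, rel j k ∨ rel k j) ∧
    (∀ j k, ¬ rel k j ↔ (rel j k ∧ ¬ (rel j k ∧ rel k j))) :=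
  profile_relation_total_preorder_general scat Tmax lam t hlam L hL rel hrel
end

section
/- Let {λ_n}_{n∈ℕ}, {μ_n}_{n∈ℕ} ⊂ (0,∞), {t_n}_{n∈ℕ} ⊂ ℝ, and let T_j, T_k ∈ (0, +∞]. Then it is impossible that the following three conditions hold simultaneously: (i) t_n/μ_n → +∞ as n → ∞; (ii) for every real T < T_k, limsup_{n→∞} (μ_n T + t_n)/λ_n < T_j (strict inequality of extended reals; in particular when T_j = +∞ this means the sequence is bounded above); (iii) for every real T < T_j, limsup_{n→∞} (λ_n T − t_n)/μ_n < T_k. -/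
/-!
Take `T = 0` in (ii): since `t_n > 0` eventually, `t_n ≤ b λ_n` eventually for some real
`0 < b < T_j`. Choosing `b < a < T_j`, the gap gives
`(λ_n a - t_n)/μ_n ≥ (a/b - 1) t_n/μ_n → +∞`, so the limsup in (iii) at `T = a` is `+∞`,
contradicting (iii).
-/

open Filter Topology

lemma EReal.exists_eventually_le_of_limsup_lt {α : Type*} {l : Filter α} {f : α → ℝ} {c : EReal}
    (h : limsup (fun x => (f x : EReal)) l < c) :
    ∃ b a : ℝ, b < a ∧ (a : EReal) < c ∧ ∀ᶠ x in l, f x ≤ b := by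
  obtain ⟨a, hlim_a, hac⟩ := EReal.exists_between_coe_real h
  obtain ⟨b, hlim_b, hba⟩ := EReal.exists_between_coe_real hlim_a
  refine ⟨b, a, by exact_mod_cast hba, hac, ?_⟩
  filter_upwards [eventually_lt_of_limsup_lt hlim_b] with x hx
  exact_mod_cast hx.le

lemma tendsto_mul_sub_div_atTop {lam mu t : ℕ → ℝ} {a b : ℝ} (hb : 0 < b) (hba : b < a)
    (hmu : ∀ n, 0 < mu n) (ht : Tendsto (fun n => t n / mu n) atTop atTop)
    (hle : ∀ᶠ n in atTop, t n ≤ b * lam n) :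
    Tendsto (fun n => (lam n * a - t n) / mu n) atTop atTop := by
  have hgap : 0 < a / b - 1 := by rw [sub_pos, one_lt_div hb]; exact hba
  refine tendsto_atTop_mono' _ ?_ (ht.const_mul_atTop hgap)
  filter_upwards [hle] with n hn
  have key : (a / b - 1) * t n ≤ lam n * a - t n := by
    have hscaled : a / b * t n ≤ a / b * (b * lam n) :=
      mul_le_mul_of_nonneg_left hn (div_pos (hb.trans hba) hb).le
    have hcancel : a / b * (b * lam n) = lam n * a := by field_simp
    linarith
  rw [← mul_div_assoc]
  exact div_le_div_of_nonneg_right key (hmu n).le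

theorem no_equivalence_with_divergent_translation_general
    (lam mu t : ℕ → ℝ)
    (hlam : ∀ n, 0 < lam n) (hmu : ∀ n, 0 < mu n)
    (Tj Tk : EReal) (hTk : 0 < Tk)
    (h1 : Tendsto (fun n => t n / mu n) atTop atTop)
    (h2 : ∀ T : ℝ, (T : EReal) < Tk →
      limsup (fun n => (((mu n * T + t n) / lam n : ℝ) : EReal)) atTop < Tj)
    (h3 : ∀ T : ℝ, (T : EReal) < Tj →
      limsup (fun n => (((lam n * T - t n) / mu n : ℝ) : EReal)) atTop < Tk) :
    False := by
  have ht_pos : ∀ᶠ n in atTop, 0 < t n := by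
    filter_upwards [h1.eventually_gt_atTop 0] with n hn
    exact (div_pos_iff_of_pos_right (hmu n)).mp hn
  have h2_zero := h2 0 (by exact_mod_cast hTk)
  simp only [mul_zero, zero_add] at h2_zero
  obtain ⟨b, a, hba, haTj, hle⟩ := EReal.exists_eventually_le_of_limsup_lt h2_zero
  have hle' : ∀ᶠ n in atTop, t n ≤ b * lam n :=
    hle.mono fun n hn => (div_le_iff₀ (hlam n)).mp hn
  have hb : 0 < b := by
    obtain ⟨n, hn, hpos⟩ := (hle'.and ht_pos).exists
    exact pos_of_mul_pos_left (hpos.trans_le hn) (hlam n).le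
  have h3_top := (EReal.tendsto_coe_nhds_top_iff.2
    (tendsto_mul_sub_div_atTop hb hba hmu h1 hle')).limsup_eq
  exact not_top_lt (h3_top ▸ h3 a haTj)

/-- Claim A.3, first part: if `t_n/μ_n → +∞`, then the two limsup conditions expressing the
equivalence `(j) ≃ (k)` of two profiles cannot both hold. -/
theorem no_equivalence_with_divergent_translation
    (lam mu t : ℕ → ℝ)
    (hlam : ∀ n, 0 < lam n) (hmu : ∀ n, 0 < mu n)
    (Tj Tk : EReal) (hTj : 0 < Tj) (hTk : 0 < Tk)
    (h1 : Tendsto (fun n => t n / mu n) atTop atTop)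
    (h2 : ∀ T : ℝ, (T : EReal) < Tk →
      limsup (fun n => (((mu n * T + t n) / lam n : ℝ) : EReal)) atTop < Tj)
    (h3 : ∀ T : ℝ, (T : EReal) < Tj →
      limsup (fun n => (((lam n * T - t n) / mu n : ℝ) : EReal)) atTop < Tk) :
    False :=
  no_equivalence_with_divergent_translation_general lam mu t hlam hmu Tj Tk hTk h1 h2 h3
end

section
/- Let {λ_n}_{n∈ℕ}, {μ_n}_{n∈ℕ} ⊂ (0,∞) and T_j, T_k ∈ (0, +∞]. Assume: (i) for every real T < T_k, limsup_{n→∞} (μ_n T)/λ_n < T_j (strict inequality of extended reals; when T_j = +∞ this means the sequence is bounded above); (ii) for every real T < T_j, limsup_{n→∞} (λ_n T)/μ_n < T_k. Then 0 < liminf_{n→∞} λ_n/μ_n ≤ limsup_{n→∞} λ_n/μ_n < +∞; moreover T_j = +∞ if and only if T_k = +∞, and if T_j < +∞ then T_k < +∞ and λ_n/μ_n → T_k/T_j as n → ∞. -/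
open Filter Topology

/-! If rescaling times below `Tj` by `lam n / mu n` eventually lands below `Tk`, then the ratio
`lam n / mu n` is eventually bounded, and testing with times `T` close to `Tj` gives
`limsup lam n / mu n ≤ Tk / Tj`. The equivalence provides this in both directions, so the ratio
is squeezed between positive bounds, and onto `Tk / Tj` when both times are finite. If `Tj = ⊤`
but `Tk` is finite, a time `T ≫ Tk` would be rescaled by a ratio bounded below to beyond `Tk`. -/

/-- Hypothesis (ii) of the equivalence; hypothesis (i) is `ScaledLimsupLt mu lam Tk Tj`. -/
def ScaledLimsupLt (lam mu : ℕ → ℝ) (Tj Tk : EReal) : Prop :=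
  ∀ T : ℝ, (T : EReal) < Tj → limsup (fun n => ((lam n * T / mu n : ℝ) : EReal)) atTop < Tk

lemma eventually_lt_div_of_eventually_div_lt {ι : Type*} {l : Filter ι} {lam mu : ι → ℝ}
    (hlam : ∀ n, 0 < lam n) (hmu : ∀ n, 0 < mu n) {C : ℝ} (h : ∀ᶠ n in l, mu n / lam n < C) :
    ∀ᶠ n in l, C⁻¹ < lam n / mu n := by
  filter_upwards [h] with n hn
  exact inv_lt_of_inv_lt₀ (div_pos (hlam n) (hmu n)) (by rwa [inv_div])

namespace ScaledLimsupLt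

variable {lam mu : ℕ → ℝ}

lemma eventually_div_mul_lt {Tj Tk : EReal} (H : ScaledLimsupLt lam mu Tj Tk) {T : ℝ}
    (hT : (T : EReal) < Tj) {a : ℝ} (ha : Tk ≤ a) :
    ∀ᶠ n in atTop, lam n / mu n * T < a := by
  filter_upwards [eventually_lt_of_limsup_lt ((H T hT).trans_le ha)] with n hn
  rw [← mul_div_right_comm]
  exact_mod_cast hn

lemma exists_eventually_div_lt {Tj Tk : EReal} (H : ScaledLimsupLt lam mu Tj Tk)
    (hTj : 0 < Tj) : ∃ C : ℝ, 0 < C ∧ ∀ᶠ n in atTop, lam n / mu n < C := by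
  obtain ⟨T, hT₀, hTj⟩ := EReal.exists_between_coe_real hTj
  have hT : (0 : ℝ) < T := by exact_mod_cast hT₀
  obtain ⟨M, hM, -⟩ := EReal.exists_between_coe_real ((H T hTj).trans_le le_top)
  refine ⟨max (M / T) 1, by positivity, ?_⟩
  filter_upwards [eventually_lt_of_limsup_lt hM] with n hn
  refine lt_max_of_lt_left ((lt_div_iff₀ hT).2 ?_)
  rw [← mul_div_right_comm]
  exact_mod_cast hn

lemma eq_top_of_eq_top {Tj Tk : EReal} (H : ScaledLimsupLt lam mu Tj Tk) (hTk : 0 < Tk)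
    {c : ℝ} (hc : 0 < c) (hlow : ∀ᶠ n in atTop, c < lam n / mu n) (hTj : Tj = ⊤) : Tk = ⊤ := by
  by_contra hTk_top
  obtain ⟨tk, rfl⟩ : ∃ tk : ℝ, Tk = tk := ⟨Tk.toReal, (EReal.coe_toReal hTk_top hTk.ne_bot).symm⟩
  have htk : 0 < tk := by exact_mod_cast hTk
  obtain ⟨n, hn_up, hn_low⟩ :=
    ((H.eventually_div_mul_lt (T := tk / c) (hTj ▸ EReal.coe_lt_top _) le_rfl).and hlow).exists
  have : tk < lam n / mu n * (tk / c) := by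
    calc tk = c * (tk / c) := by field_simp
      _ < lam n / mu n * (tk / c) := by gcongr
  linarith

lemma eventually_div_lt {tj tk : ℝ} (H : ScaledLimsupLt lam mu tj tk) (htj : 0 < tj)
    (htk : 0 < tk) {x : ℝ} (hx : tk / tj < x) : ∀ᶠ n in atTop, lam n / mu n < x := by
  have hx₀ : 0 < x := (div_pos htk htj).trans hx
  have hT : tk / x < tj := by rwa [div_lt_iff₀ hx₀, ← div_lt_iff₀' htj]
  filter_upwards [H.eventually_div_mul_lt (T := tk / x) (by exact_mod_cast hT) le_rfl] with n hn
  rwa [← lt_div_iff₀ (by positivity), div_div_cancel₀ htk.ne'] at hn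

lemma eventually_lt_div (hlam : ∀ n, 0 < lam n) (hmu : ∀ n, 0 < mu n) {tj tk : ℝ}
    (H : ScaledLimsupLt mu lam tk tj) (htj : 0 < tj) (htk : 0 < tk) {x : ℝ} (hx : x < tk / tj) :
    ∀ᶠ n in atTop, x < lam n / mu n := by
  rcases le_or_gt x 0 with hx₀ | hx₀
  · exact Eventually.of_forall fun n => hx₀.trans_lt (div_pos (hlam n) (hmu n))
  · have hinv : tj / tk < x⁻¹ := by rwa [← inv_div, inv_lt_inv₀ (div_pos htk htj) hx₀]
    simpa using eventually_lt_div_of_eventually_div_lt hlam hmu (H.eventually_div_lt htk htj hinv)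

end ScaledLimsupLt

/-- Claim A.3, second part: if two profiles with vanishing time translations are equivalent for
the preorder `≼`, then the ratio of their scaling parameters stays bounded above and below, the
maximal forward existence times are simultaneously finite or infinite, and in the finite case
the ratio converges to `T_k / T_j`. -/
theorem equivalence_scaling_ratio
    (lam mu : ℕ → ℝ) (hlam : ∀ n, 0 < lam n) (hmu : ∀ n, 0 < mu n)
    (Tj Tk : EReal) (hTj : 0 < Tj) (hTk : 0 < Tk)
    (h1 : ∀ T : ℝ, (T : EReal) < Tk →
      limsup (fun n => ((mu n * T / lam n : ℝ) : EReal)) atTop < Tj)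
    (h2 : ∀ T : ℝ, (T : EReal) < Tj →
      limsup (fun n => ((lam n * T / mu n : ℝ) : EReal)) atTop < Tk) :
    0 < liminf (fun n => ((lam n / mu n : ℝ) : EReal)) atTop ∧
    liminf (fun n => ((lam n / mu n : ℝ) : EReal)) atTop ≤
      limsup (fun n => ((lam n / mu n : ℝ) : EReal)) atTop ∧
    limsup (fun n => ((lam n / mu n : ℝ) : EReal)) atTop < ⊤ ∧
    (Tj = ⊤ ↔ Tk = ⊤) ∧
    (Tj < ⊤ → Tk < ⊤ ∧
      Tendsto (fun n => lam n / mu n) atTop (nhds (Tk.toReal / Tj.toReal))) := by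
  obtain ⟨C, hC, hup⟩ := ScaledLimsupLt.exists_eventually_div_lt h2 hTj
  obtain ⟨C', hC', hup'⟩ := ScaledLimsupLt.exists_eventually_div_lt h1 hTk
  have hlow := eventually_lt_div_of_eventually_div_lt hlam hmu hup'
  have hlow' := eventually_lt_div_of_eventually_div_lt hmu hlam hup
  have hiff : Tj = ⊤ ↔ Tk = ⊤ :=
    ⟨ScaledLimsupLt.eq_top_of_eq_top h2 hTk (inv_pos.2 hC') hlow,
      ScaledLimsupLt.eq_top_of_eq_top h1 hTj (inv_pos.2 hC) hlow'⟩
  refine ⟨?_, liminf_le_limsup, ?_, hiff, fun hTj_top => ?_⟩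
  · refine (EReal.coe_pos.2 (inv_pos.2 hC')).trans_le (le_liminf_of_le ?_ ?_)
    · isBoundedDefault
    · filter_upwards [hlow] with n hn using EReal.coe_le_coe_iff.2 hn.le
  · refine (limsup_le_of_le ?_ ?_).trans_lt (EReal.coe_lt_top C)
    · isBoundedDefault
    · filter_upwards [hup] with n hn using EReal.coe_le_coe_iff.2 hn.le
  obtain ⟨tj, rfl⟩ : ∃ tj : ℝ, Tj = tj := ⟨Tj.toReal, (EReal.coe_toReal hTj_top.ne hTj.ne_bot).symm⟩
  have hTk_top : Tk ≠ ⊤ := fun h => hTj_top.ne (hiff.2 h)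
  obtain ⟨tk, rfl⟩ : ∃ tk : ℝ, Tk = tk := ⟨Tk.toReal, (EReal.coe_toReal hTk_top hTk.ne_bot).symm⟩
  have htj : 0 < tj := by exact_mod_cast hTj
  have htk : 0 < tk := by exact_mod_cast hTk
  refine ⟨EReal.coe_lt_top tk, ?_⟩
  rw [EReal.toReal_coe, EReal.toReal_coe]
  exact tendsto_order.2 ⟨fun x hx => ScaledLimsupLt.eventually_lt_div hlam hmu h1 htj htk hx,
    fun x hx => ScaledLimsupLt.eventually_div_lt h2 htj htk hx⟩
end

section
/- Let N ≥ 1 and let {(λ_{j,n}, x_{j,n}, t_{j,n})}_{n∈ℕ}, indexed by j ≥ 1, be orthogonal parameter sequences in (0,∞)×ℝ^N×ℝ. For each pair (j,k) of positive integers let μ_{j,k} > 0, y_{j,k} ∈ ℝ^N, s_{j,k} ∈ ℝ be constants, and define the composed parameters ν_{j,k,n} = λ_{j,n} μ_{j,k}, z_{j,k,n} = x_{j,n} + λ_{j,n} y_{j,k}, τ_{j,k,n} = t_{j,n} + λ_{j,n} s_{j,k}. Then for all j ≠ j' and all k, k', one has |log(ν_{j,k,n}/ν_{j',k',n})| + |τ_{j,k,n}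 − τ_{j',k',n}|/ν_{j,k,n} + |z_{j,k,n} − z_{j',k',n}|/ν_{j,k,n} → +∞ as n → ∞. -/
/-!
Write `D = |log (λ/λ')|` for the scale term of the orthogonality functional. A translation by
`λ y`, `λ' y'` moves the position and time terms by at most `‖y‖ + (λ'/λ) ‖y'‖ ≤ ‖y‖ + e^D ‖y'‖`,
and leaves `D` unchanged; so either `D` is already large or the translated functional is
close to the original one. A rescaling by fixed `μ, μ'` shifts `D` by the constant
`|log (μ/μ')|` and multiplies the other two terms by `μ⁻¹`.
-/

open Filter Topology

/-- Orthogonality of a family of parameter sequences. -/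
def OrthoParams {N : ℕ} {ι : Type*} (lam : ι → ℕ → ℝ)
    (x : ι → ℕ → EuclideanSpace ℝ (Fin N)) (t : ι → ℕ → ℝ) : Prop :=
  ∀ j k : ι, j ≠ k →
    Tendsto (fun n => |Real.log (lam j n / lam k n)| + |t j n - t k n| / lam j n
      + ‖x j n - x k n‖ / lam j n) atTop atTop

theorem tendsto_atTop_of_le_add_comp_of_le {α : Type*} {l : Filter α} {f g D : α → ℝ}
    {φ : ℝ → ℝ} (hφ : Monotone φ) (hf : Tendsto f l atTop) (hDg : ∀ n, D n ≤ g n)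
    (hfg : ∀ n, f n ≤ g n + φ (D n)) : Tendsto g l atTop := by
  refine tendsto_atTop.2 fun M => ?_
  filter_upwards [tendsto_atTop.1 hf (M + φ M)] with n hn
  rcases le_total (D n) M with hDM | hMD
  · linarith [hfg n, hφ hDM]
  · exact hMD.trans (hDg n)

theorem div_le_exp_abs_log_div {a b : ℝ} (ha : 0 < a) (hb : 0 < b) :
    b / a ≤ Real.exp |Real.log (a / b)| := by
  rw [← Real.exp_log (div_pos hb ha), ← inv_div, Real.log_inv]
  exact Real.exp_le_exp.2 (neg_le_abs _)

theorem norm_sub_le_norm_add_smul_sub_add_smul {E : Type*} [SeminormedAddCommGroup E]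
    [NormedSpace ℝ E] {a b : ℝ} (ha : 0 ≤ a) (hb : 0 ≤ b) (u u' v v' : E) :
    ‖u - u'‖ ≤ ‖(u + a • v) - (u' + b • v')‖ + a * ‖v‖ + b * ‖v'‖ := by
  calc ‖u - u'‖ = ‖((u + a • v) - (u' + b • v')) - a • v + b • v'‖ := by congr 1; abel
    _ ≤ ‖(u + a • v) - (u' + b • v')‖ + ‖a • v‖ + ‖b • v'‖ :=
      (norm_add_le _ _).trans (add_le_add_left (norm_sub_le _ _) _)
    _ = _ := by rw [norm_smul, norm_smul, Real.norm_of_nonneg ha, Real.norm_of_nonneg hb]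

section OrthoDist

variable {E : Type*} [SeminormedAddCommGroup E]

noncomputable def orthoDist (a : ℝ) (x : E) (t b : ℝ) (x' : E) (t' : ℝ) : ℝ :=
  |Real.log (a / b)| + |t - t'| / a + ‖x - x'‖ / a

theorem abs_log_div_le_orthoDist {a b t t' : ℝ} (ha : 0 < a) (x x' : E) :
    |Real.log (a / b)| ≤ orthoDist a x t b x' t' := by
  unfold orthoDist
  have := div_nonneg (abs_nonneg (t - t')) ha.le
  have := div_nonneg (norm_nonneg (x - x')) ha.le
  linarith

theorem min_one_inv_mul_orthoDist_sub_le {a b μ μ' : ℝ} (ha : 0 < a) (hb : 0 < b) (hμ : 0 < μ)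
    (hμ' : 0 < μ') (x x' : E) (t t' : ℝ) :
    min 1 μ⁻¹ * orthoDist a x t b x' t' - |Real.log (μ / μ')|
      ≤ orthoDist (a * μ) x t (b * μ') x' t' := by
  have hlog : Real.log (a * μ / (b * μ')) = Real.log (a / b) + Real.log (μ / μ') := by
    rw [mul_div_mul_comm, Real.log_mul (div_pos ha hb).ne' (div_pos hμ hμ').ne']
  have hscale : |Real.log (a / b)| - |Real.log (μ / μ')| ≤ |Real.log (a * μ / (b * μ'))| := by
    have := abs_sub (Real.log (a / b) + Real.log (μ / μ')) (Real.log (μ / μ'))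
    rw [add_sub_cancel_right] at this
    rw [hlog]
    linarith
  have hdiv : ∀ r : ℝ, r / (a * μ) = μ⁻¹ * (r / a) := fun r => by field_simp
  have hm1 : min 1 μ⁻¹ * |Real.log (a / b)| ≤ |Real.log (a / b)| :=
    mul_le_of_le_one_left (abs_nonneg _) (min_le_left _ _)
  have hmT : min 1 μ⁻¹ * (|t - t'| / a) ≤ μ⁻¹ * (|t - t'| / a) :=
    mul_le_mul_of_nonneg_right (min_le_right _ _) (div_nonneg (abs_nonneg _) ha.le)
  have hmX : min 1 μ⁻¹ * (‖x - x'‖ / a) ≤ μ⁻¹ * (‖x - x'‖ / a) :=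
    mul_le_mul_of_nonneg_right (min_le_right _ _) (div_nonneg (norm_nonneg _) ha.le)
  unfold orthoDist
  rw [hdiv, hdiv]
  linarith

variable [NormedSpace ℝ E]

theorem orthoDist_le_orthoDist_translate_add {a b : ℝ} (ha : 0 < a) (hb : 0 < b)
    (x x' y y' : E) (t t' s s' : ℝ) :
    orthoDist a x t b x' t'
      ≤ orthoDist a (x + a • y) (t + a * s) b (x' + b • y') (t' + b * s')
        + ((|s| + ‖y‖) + Real.exp |Real.log (a / b)| * (|s'| + ‖y'‖)) := by
  have hT := norm_sub_le_norm_add_smul_sub_add_smul ha.le hb.le t t' s s'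
  have hX := norm_sub_le_norm_add_smul_sub_add_smul ha.le hb.le x x' y y'
  simp only [Real.norm_eq_abs, smul_eq_mul] at hT
  have hratio : b / a * (|s'| + ‖y'‖) ≤ Real.exp |Real.log (a / b)| * (|s'| + ‖y'‖) :=
    mul_le_mul_of_nonneg_right (div_le_exp_abs_log_div ha hb) (by positivity)
  have hsplit : ∀ r c d : ℝ, (r + a * c + b * d) / a = r / a + c + b / a * d := fun r c d => by
    field_simp
  have hT' := div_le_div_of_nonneg_right hT ha.le
  have hX' := div_le_div_of_nonneg_right hX ha.le
  rw [hsplit] at hT' hX'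
  unfold orthoDist
  linarith

end OrthoDist

section Sequences

variable {α E : Type*} [SeminormedAddCommGroup E] {l : Filter α} {a b : α → ℝ}
  {x x' : α → E} {t t' : α → ℝ}

theorem Filter.Tendsto.orthoDist_rescale (h : Tendsto (fun n =>
      orthoDist (a n) (x n) (t n) (b n) (x' n) (t' n)) l atTop)
    (ha : ∀ n, 0 < a n) (hb : ∀ n, 0 < b n) {μ μ' : ℝ} (hμ : 0 < μ) (hμ' : 0 < μ') :
    Tendsto (fun n => orthoDist (a n * μ) (x n) (t n) (b n * μ') (x' n) (t' n)) l atTop :=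
  tendsto_atTop_mono
    (fun n => min_one_inv_mul_orthoDist_sub_le (ha n) (hb n) hμ hμ' (x n) (x' n) (t n) (t' n))
    (tendsto_atTop_add_const_right l _
      (h.const_mul_atTop (lt_min one_pos (inv_pos.2 hμ))))

theorem Filter.Tendsto.orthoDist_translate [NormedSpace ℝ E] (h : Tendsto (fun n =>
      orthoDist (a n) (x n) (t n) (b n) (x' n) (t' n)) l atTop)
    (ha : ∀ n, 0 < a n) (hb : ∀ n, 0 < b n) (y y' : E) (s s' : ℝ) :
    Tendsto (fun n => orthoDist (a n) (x n + a n • y) (t n + a n * s)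
      (b n) (x' n + b n • y') (t' n + b n * s')) l atTop := by
  have hφ : Monotone fun D => (|s| + ‖y‖) + Real.exp D * (|s'| + ‖y'‖) := fun _ _ hD =>
    add_le_add_right (mul_le_mul_of_nonneg_right (Real.exp_le_exp.2 hD)
      (add_nonneg (abs_nonneg _) (norm_nonneg _))) _
  exact tendsto_atTop_of_le_add_comp_of_le hφ h
    (fun n => abs_log_div_le_orthoDist (ha n) _ _)
    (fun n => orthoDist_le_orthoDist_translate_add (ha n) (hb n) _ _ y y' _ _ s s')

end Sequences

theorem composed_parameters_orthogonal_general
    (N : ℕ)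
    (lam : ℕ → ℕ → ℝ) (x : ℕ → ℕ → EuclideanSpace ℝ (Fin N)) (t : ℕ → ℕ → ℝ)
    (hlam : ∀ j n, 0 < lam j n)
    (hortho : OrthoParams lam x t)
    (mu : ℕ → ℕ → ℝ) (hmu : ∀ j k, 0 < mu j k)
    (y : ℕ → ℕ → EuclideanSpace ℝ (Fin N)) (s : ℕ → ℕ → ℝ) :
    ∀ j k j' k' : ℕ, j ≠ j' →
      Tendsto (fun n =>
          |Real.log ((lam j n * mu j k) / (lam j' n * mu j' k'))|
          + |(t j n + lam j n * s j k) - (t j' n + lam j' n * s j' k')|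
              / (lam j n * mu j k)
          + ‖(x j n + lam j n • y j k) - (x j' n + lam j' n • y j' k')‖
              / (lam j n * mu j k))
        atTop atTop := by
  intro j k j' k' hjj'
  exact ((hortho j j' hjj').orthoDist_translate (hlam j) (hlam j')
    (y j k) (y j' k') (s j k) (s j' k')).orthoDist_rescale (hlam j) (hlam j')
    (hmu j k) (hmu j' k')

/-- Step 3 (equation (DPD15)) of the proof of Lemma 3.7: composing orthogonal parameter
sequences with fixed rescalings and translations preserves orthogonality across distinct
outer indices. -/
theorem composed_parameters_orthogonal
    (N : ℕ) (hN : 1 ≤ N)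
    (lam : ℕ → ℕ → ℝ) (x : ℕ → ℕ → EuclideanSpace ℝ (Fin N)) (t : ℕ → ℕ → ℝ)
    (hlam : ∀ j n, 0 < lam j n)
    (hortho : OrthoParams lam x t)
    (mu : ℕ → ℕ → ℝ) (hmu : ∀ j k, 0 < mu j k)
    (y : ℕ → ℕ → EuclideanSpace ℝ (Fin N)) (s : ℕ → ℕ → ℝ) :
    ∀ j k j' k' : ℕ, j ≠ j' →
      Tendsto (fun n =>
          |Real.log ((lam j n * mu j k) / (lam j' n * mu j' k'))|
          + |(t j n + lam j n * s j k) - (t j' n + lam j' n * s j' k')|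
              / (lam j n * mu j k)
          + ‖(x j n + lam j n • y j k) - (x j' n + lam j' n • y j' k')‖
              / (lam j n * mu j k))
        atTop atTop :=
  composed_parameters_orthogonal_general N lam x t hlam hortho mu hmu y s
end
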